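/- arXiv:1512.08063 — 4 statements merged into one kernel-verified Lean document; each statement's English description precedes it below -/
import Mathlib

section
/- For every τ in the upper half-plane and all z, w ∈ ℂ, the level-three theta functions satisfy the three addition formulae: θ₀²·θ₀(z+w)·θ₀(z−w) = θ₁(z)θ₂(z)θ₂(w)² − θ₀(z)²θ₀(w)θ₁(w); θ₀²·θ₁(z+w)·θ₀(z−w) = θ₀(z)θ₁(z)θ₁(w)² − θ₂(z)²θ₀(w)θ₂(w); θ₀²·θ₂(z+w)·θ₀(z−w) = θ₀(z)θ₂(z)θ₀(w)² − θ₁(z)²θ₁(w)θ₂(w). -/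
/-!
Expanding the products, both sides of each formula become sums over `ℤ⁴` of exponentials of a
quadratic form in the shifted index `m = n + a`. A Hadamard-type orthogonal change of variables
identifies the left side of the first formula, on the half of `ℤ⁴` where `n₁ + n₂ + n₃ + n₄` is odd,
with half of the first product on the right, and on the even half with minus half of the second
product; the remaining halves of the two products are matched by a third such map.
Translating `x` by `τ / 3` turns `θ_k(x)` into `θ_{k+1}(x)` times a factor independent of `k`, so
translating both `z` and `w` takes the first formula to the third and the third to the second.
-/

open Complex

/-- The level-three theta function `θ_k(z,τ)`. -/
noncomputable def theta (k : ℤ) (z τ : ℂ) : ℂ :=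
  ∑' n : ℤ, Complex.exp (3 * Real.pi * Complex.I * ((n : ℂ) + (k : ℂ) / 3 - 1 / 6) ^ 2 * τ) *
    Complex.exp (6 * Real.pi * Complex.I * ((n : ℂ) + (k : ℂ) / 3 - 1 / 6) * (z + 1 / 2))

open Real Set

noncomputable def thetaTerm (τ a x : ℂ) (n : ℤ) : ℂ :=
  cexp (3 * π * I * (n + a) ^ 2 * τ + 6 * π * I * (n + a) * (x + 1 / 2))

lemma theta_eq_tsum_thetaTerm (k : ℤ) (x τ : ℂ) :
    theta k x τ = ∑' n : ℤ, thetaTerm τ (k / 3 - 1 / 6) x n := by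
  refine tsum_congr fun n => ?_
  rw [thetaTerm, ← Complex.exp_add]
  congr 1
  ring

lemma summable_norm_thetaTerm {τ : ℂ} (hτ : 0 < τ.im) (a x : ℂ) :
    Summable fun n => ‖thetaTerm τ a x n‖ := by
  have h3τ : 0 < (3 * τ).im := by simpa using hτ
  have hj := (summable_jacobiTheta₂_term_iff (3 * a * τ + 3 * (x + 1 / 2)) _).2 h3τ
  refine summable_norm_iff.2 ((hj.mul_left
    (cexp (3 * π * I * a ^ 2 * τ + 6 * π * I * a * (x + 1 / 2)))).congr fun n => ?_)
  rw [jacobiTheta₂_term, ← Complex.exp_add, thetaTerm]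
  congr 1
  ring

lemma theta_add_three (k : ℤ) (x τ : ℂ) : theta (k + 3) x τ = theta k x τ := by
  rw [theta_eq_tsum_thetaTerm, theta_eq_tsum_thetaTerm]
  conv_rhs => rw [← (Equiv.addRight (1 : ℤ)).tsum_eq]
  refine tsum_congr fun n => ?_
  simp only [thetaTerm, Equiv.coe_addRight]
  push_cast
  congr 1
  ring

lemma theta_add_div_three (k : ℤ) (x τ : ℂ) :
    theta k (x + τ / 3) τ = cexp (-(π * I * (τ / 3 + 2 * x + 1))) * theta (k + 1) x τ := by
  rw [theta_eq_tsum_thetaTerm, theta_eq_tsum_thetaTerm, ← tsum_mul_left]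
  refine tsum_congr fun n => ?_
  rw [thetaTerm, thetaTerm, ← Complex.exp_add]
  push_cast
  congr 1
  ring

local notation "ℤ⁴" => (ℤ × ℤ) × ℤ × ℤ

noncomputable def thetaTerm₄ (τ : ℂ) (k : Fin 4 → ℤ) (x : Fin 4 → ℂ) (n : ℤ⁴) : ℂ :=
  (thetaTerm τ (k 0 / 3 - 1 / 6) (x 0) n.1.1 * thetaTerm τ (k 1 / 3 - 1 / 6) (x 1) n.1.2) *
    (thetaTerm τ (k 2 / 3 - 1 / 6) (x 2) n.2.1 * thetaTerm τ (k 3 / 3 - 1 / 6) (x 3) n.2.2)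

lemma summable_thetaTerm₄ {τ : ℂ} (hτ : 0 < τ.im) (k : Fin 4 → ℤ) (x : Fin 4 → ℂ) :
    Summable (thetaTerm₄ τ k x) := by
  have h (i : Fin 4) := summable_norm_thetaTerm hτ (k i / 3 - 1 / 6) (x i)
  have h₄ := summable_mul_of_summable_norm ((h 0).mul_norm (h 1)) ((h 2).mul_norm (h 3))
  unfold thetaTerm₄
  exact h₄

lemma tsum_thetaTerm₄ {τ : ℂ} (hτ : 0 < τ.im) (k : Fin 4 → ℤ) (x : Fin 4 → ℂ) :
    ∑' n, thetaTerm₄ τ k x n =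
      (theta (k 0) (x 0) τ * theta (k 1) (x 1) τ) *
        (theta (k 2) (x 2) τ * theta (k 3) (x 3) τ) := by
  have h := summable_norm_thetaTerm hτ
  simp only [theta_eq_tsum_thetaTerm]
  rw [tsum_mul_tsum_of_summable_norm (h _ _) (h _ _),
    tsum_mul_tsum_of_summable_norm (h _ _) (h _ _),
    tsum_mul_tsum_of_summable_norm ((h _ _).mul_norm (h _ _)) ((h _ _).mul_norm (h _ _))]
  simp only [thetaTerm₄]

theorem Set.BijOn.tsum_eq {G ι κ : Type*} [AddCommMonoid G] [TopologicalSpace G]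
    {f : ι → G} {g : κ → G} {φ : ι → κ} {s : Set ι} {t : Set κ} (h : BijOn φ s t)
    (hfg : ∀ n ∈ s, f n = g (φ n)) : ∑' n : s, f n = ∑' n : t, g n := by
  rw [← (h.equiv φ).tsum_eq]
  exact tsum_congr fun n => hfg n n.2

theorem tsum_eq_tsum_sub_tsum_of_bijOn {G ι κ μ : Type*} [NormedAddCommGroup G] [CompleteSpace G]
    {L : ι → G} {D : κ → G} {E : μ → G} (hL : Summable L) (hD : Summable D) (hE : Summable E)
    {s : Set ι} {t : Set κ} {u : Set μ} {φ : ι → κ} {ψ : ι → μ} {χ : κ → μ}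
    (hφ : BijOn φ sᶜ t) (hψ : BijOn ψ s u) (hχ : BijOn χ tᶜ uᶜ)
    (hLφ : ∀ n ∈ sᶜ, L n = D (φ n)) (hLψ : ∀ n ∈ s, L n = -E (ψ n))
    (hDχ : ∀ n ∈ tᶜ, D n = E (χ n)) :
    ∑' n, L n = ∑' n, D n - ∑' n, E n := by
  rw [← (hL.subtype _).tsum_add_tsum_compl (s := s) (hL.subtype _),
    ← (hD.subtype _).tsum_add_tsum_compl (s := t) (hD.subtype _),
    ← (hE.subtype _).tsum_add_tsum_compl (s := u) (hE.subtype _),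
    hφ.tsum_eq hLφ, hψ.tsum_eq (g := fun m => -E m) hLψ, hχ.tsum_eq hDχ, tsum_neg]
  abel

/- In the shifted coordinates `m = n + a`, where `a` is the characteristic vector, each of the
maps below is an orthogonal change of variables: `oddToFirst`, for instance, is
`m ↦ ½ (m₁ + m₂ + m₃ + m₄, -m₁ - m₂ + m₃ + m₄, m₁ - m₂ + m₃ - m₄, -m₁ + m₂ + m₃ - m₄)`.
It preserves `|m|²` and turns the pairing with `(0, 0, z + w, z - w)` into the pairing with
`(z, z, w, w)`, so summands agree up to a root of unity. Whether the image is integral depends on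
the parity of `n₁ + n₂ + n₃ + n₄`. -/
def evenSum : Set ℤ⁴ := {n | (n.1.1 + n.1.2 + n.2.1 + n.2.2) % 2 = 0}

def oddToFirst : ℤ⁴ → ℤ⁴
  | ((n₁, n₂), n₃, n₄) =>
    let h := (n₁ + n₂ + n₃ + n₄) / 2
    ((h, h - n₁ - n₂), h - n₂ - n₄, h - n₁ - n₄)

def firstToOdd : ℤ⁴ → ℤ⁴
  | ((n₁, n₂), n₃, n₄) =>
    let h := (n₁ + n₂ + n₃ + n₄) / 2
    ((h - n₂ - n₄, h - n₂ - n₃), h + 1, h - n₃ - n₄)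

def evenToSecond : ℤ⁴ → ℤ⁴
  | ((n₁, n₂), n₃, n₄) =>
    let h := (n₁ + n₂ + n₃ + n₄) / 2
    ((h - n₂, h - n₁), h - n₄, h - n₁ - n₂ - n₄)

def secondToEven : ℤ⁴ → ℤ⁴
  | ((n₁, n₂), n₃, n₄) =>
    let h := (n₁ + n₂ + n₃ + n₄) / 2
    ((h - n₂ - n₄, h - n₁ - n₄), h, h - n₃ - n₄)

def firstToSecond : ℤ⁴ → ℤ⁴
  | ((n₁, n₂), n₃, n₄) =>
    let h := (n₁ + n₂ + n₃ + n₄) / 2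
    ((h + 1 - n₄, h + 1 - n₃), h + 1 - n₂, h + 1 - n₁)

def secondToFirst : ℤ⁴ → ℤ⁴
  | ((n₁, n₂), n₃, n₄) =>
    let h := (n₁ + n₂ + n₃ + n₄) / 2
    ((h - n₄, h - n₃), h - n₂, h - n₁)

lemma bijOn_oddToFirst : BijOn oddToFirst evenSumᶜ evenSum := by
  refine InvOn.bijOn (f' := firstToOdd) ⟨?_, ?_⟩ ?_ ?_ <;>
    rintro ⟨⟨n₁, n₂⟩, n₃, n₄⟩ hn <;> simp_all [evenSum, oddToFirst, firstToOdd] <;> omega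

lemma bijOn_evenToSecond : BijOn evenToSecond evenSum evenSum := by
  refine InvOn.bijOn (f' := secondToEven) ⟨?_, ?_⟩ ?_ ?_ <;>
    rintro ⟨⟨n₁, n₂⟩, n₃, n₄⟩ hn <;> simp_all [evenSum, evenToSecond, secondToEven] <;> omega

lemma bijOn_firstToSecond : BijOn firstToSecond evenSumᶜ evenSumᶜ := by
  refine InvOn.bijOn (f' := secondToFirst) ⟨?_, ?_⟩ ?_ ?_ <;>
    rintro ⟨⟨n₁, n₂⟩, n₃, n₄⟩ hn <;> simp_all [evenSum, firstToSecond, secondToFirst] <;> omega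

lemma thetaTerm₄_oddToFirst (τ z w : ℂ) {n : ℤ⁴} (hn : n ∈ evenSumᶜ) :
    thetaTerm₄ τ ![0, 0, 0, 0] ![0, 0, z + w, z - w] n =
      thetaTerm₄ τ ![1, 2, 2, 2] ![z, z, w, w] (oddToFirst n) := by
  obtain ⟨⟨n₁, n₂⟩, n₃, n₄⟩ := n
  have hn₄ : n₄ = 2 * ((n₁ + n₂ + n₃ + n₄) / 2) + 1 - n₁ - n₂ - n₃ := by
    simp only [evenSum, mem_compl_iff, mem_ofPred_eq] at hn; omega
  simp only [oddToFirst, thetaTerm₄, thetaTerm, Matrix.cons_val, ← Complex.exp_add]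
  generalize (n₁ + n₂ + n₃ + n₄) / 2 = k at hn₄ ⊢
  subst hn₄
  refine exp_eq_exp_iff_exists_int.2 ⟨3 * k - 3 * n₃ + 1, ?_⟩
  push_cast
  ring

lemma thetaTerm₄_evenToSecond (τ z w : ℂ) {n : ℤ⁴} (hn : n ∈ evenSum) :
    thetaTerm₄ τ ![0, 0, 0, 0] ![0, 0, z + w, z - w] n =
      -thetaTerm₄ τ ![0, 0, 0, 1] ![z, z, w, w] (evenToSecond n) := by
  obtain ⟨⟨n₁, n₂⟩, n₃, n₄⟩ := n
  have hn₄ : n₄ = 2 * ((n₁ + n₂ + n₃ + n₄) / 2) - n₁ - n₂ - n₃ := by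
    simp only [evenSum, mem_ofPred_eq] at hn; omega
  simp only [evenToSecond, thetaTerm₄, thetaTerm, Matrix.cons_val, ← Complex.exp_add]
  rw [← mul_neg_one, ← exp_pi_mul_I, ← Complex.exp_add]
  generalize (n₁ + n₂ + n₃ + n₄) / 2 = k at hn₄ ⊢
  subst hn₄
  refine exp_eq_exp_iff_exists_int.2 ⟨3 * k - 3 * n₃ - 1, ?_⟩
  push_cast
  ring

lemma thetaTerm₄_firstToSecond (τ z w : ℂ) {n : ℤ⁴} (hn : n ∈ evenSumᶜ) :
    thetaTerm₄ τ ![1, 2, 2, 2] ![z, z, w, w] n =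
      thetaTerm₄ τ ![0, 0, 0, 1] ![z, z, w, w] (firstToSecond n) := by
  obtain ⟨⟨n₁, n₂⟩, n₃, n₄⟩ := n
  have hn₄ : n₄ = 2 * ((n₁ + n₂ + n₃ + n₄) / 2) + 1 - n₁ - n₂ - n₃ := by
    simp only [evenSum, mem_compl_iff, mem_ofPred_eq] at hn; omega
  simp only [firstToSecond, thetaTerm₄, thetaTerm, Matrix.cons_val, ← Complex.exp_add]
  generalize (n₁ + n₂ + n₃ + n₄) / 2 = k at hn₄ ⊢
  subst hn₄
  congr 1
  push_cast
  ring

def AdditionFormula (τ : ℂ) (s : ℤ) : Prop :=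
  ∀ z w : ℂ, theta 0 0 τ ^ 2 * theta (2 * s) (z + w) τ * theta 0 (z - w) τ =
    theta (s + 1) z τ * theta (s + 2) z τ * theta (s + 2) w τ ^ 2 -
      theta s z τ ^ 2 * theta s w τ * theta (s + 1) w τ

theorem additionFormula_zero {τ : ℂ} (hτ : 0 < τ.im) : AdditionFormula τ 0 := by
  intro z w
  have key := tsum_eq_tsum_sub_tsum_of_bijOn (summable_thetaTerm₄ hτ _ _)
    (summable_thetaTerm₄ hτ _ _) (summable_thetaTerm₄ hτ _ _) bijOn_oddToFirst
    bijOn_evenToSecond bijOn_firstToSecond (fun _ => thetaTerm₄_oddToFirst τ z w)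
    (fun _ => thetaTerm₄_evenToSecond τ z w) (fun _ => thetaTerm₄_firstToSecond τ z w)
  simp only [tsum_thetaTerm₄ hτ, Matrix.cons_val] at key
  simp only [mul_zero, zero_add]
  linear_combination key

theorem AdditionFormula.succ {τ : ℂ} {s : ℤ} (h : AdditionFormula τ s) :
    AdditionFormula τ (s + 1) := by
  intro z w
  set c : ℂ → ℂ := fun u => cexp (-(π * I * (τ / 3 + 2 * u + 1)))
  have hc : c (z + w + τ / 3) * c (z + w) = c z ^ 2 * c w ^ 2 := by
    simp only [c, sq, ← Complex.exp_add]
    exact exp_eq_exp_iff_exists_int.2 ⟨1, by push_cast; ring⟩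
  have key := h (z + τ / 3) (w + τ / 3)
  rw [show z + τ / 3 + (w + τ / 3) = z + w + τ / 3 + τ / 3 by ring,
    show z + τ / 3 - (w + τ / 3) = z - w by ring] at key
  simp only [theta_add_div_three] at key
  rw [show 2 * s + 1 + 1 = 2 * (s + 1) by ring, show s + 2 + 1 = s + 1 + 2 by ring] at key
  have hne : c (z + w + τ / 3) * c (z + w) ≠ 0 := mul_ne_zero (exp_ne_zero _) (exp_ne_zero _)
  refine mul_left_cancel₀ hne ?_
  conv_rhs => rw [hc]
  linear_combination key

theorem addition_formulae_first_triple (τ : ℂ) (hτ : 0 < τ.im) (z w : ℂ) :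
    (theta 0 0 τ) ^ 2 * theta 0 (z + w) τ * theta 0 (z - w) τ =
      theta 1 z τ * theta 2 z τ * (theta 2 w τ) ^ 2
        - (theta 0 z τ) ^ 2 * theta 0 w τ * theta 1 w τ ∧
    (theta 0 0 τ) ^ 2 * theta 1 (z + w) τ * theta 0 (z - w) τ =
      theta 0 z τ * theta 1 z τ * (theta 1 w τ) ^ 2
        - (theta 2 z τ) ^ 2 * theta 0 w τ * theta 2 w τ ∧
    (theta 0 0 τ) ^ 2 * theta 2 (z + w) τ * theta 0 (z - w) τ =
      theta 0 z τ * theta 2 z τ * (theta 0 w τ) ^ 2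
        - (theta 1 z τ) ^ 2 * theta 1 w τ * theta 2 w τ := by
  have h₀ := additionFormula_zero hτ
  have h₁ := h₀.succ
  have h₂ := h₁.succ
  have h₃ (x : ℂ) : theta 3 x τ = theta 0 x τ := theta_add_three 0 x τ
  have h₄ (x : ℂ) : theta 4 x τ = theta 1 x τ := theta_add_three 1 x τ
  refine ⟨by simpa using h₀ z w, ?_, ?_⟩
  · have := h₂ z w
    norm_num [h₃, h₄] at this
    linear_combination this
  · have := h₁ z w
    norm_num [h₃] at this
    linear_combination this
end

section
/- For every τ in the upper half-plane and all z, w ∈ ℂ, the level-three theta functions satisfy the three addition formulae: θ₀²·θ₀(z+w)·θ₂(z−w) = θ₀(z)θ₂(z)θ₁(w)² − θ₁(z)²θ₀(w)θ₂(w); θ₀²·θ₁(z+w)·θ₂(z−w) = θ₁(z)θ₂(z)θ₀(w)² − θ₀(z)²θ₁(w)θ₂(w); θ₀²·θ₂(z+w)·θ₂(z−w) = θ₀(z)θ₁(z)θ₂(w)² − θ₂(z)²θ₀(w)θ₁(w). -/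
open Complex

/-!
With the theta function with characteristic `θ[a](x, τ) = ∑ₙ exp(πi (n+a)² τ + 2πi (n+a) x)` we
have `θ_k(z) = θ[k/3 - 1/6](3z + 3/2, 3τ)`, so `θ_j(ζ+η) θ_k(ζ-η)` is a double series over
`(n, m) ∈ ℤ²`. Sorting the pairs by the parity of `n + m` and substituting `(n+m, n-m)/2` splits it
into two products `U(ζ) V(η)` of level-six theta functions `θ[r/6](·, 6τ)`, `r ∈ ℤ/6`.
In these coordinates each addition formula is an instance of
`(u·p)(v·q) - (u·q)(v·p) = det(u, v) det(p, q)`.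
-/

open scoped Real

noncomputable def thetaCharTerm (a x τ : ℂ) (n : ℤ) : ℂ :=
  cexp (π * I * (n + a) ^ 2 * τ + 2 * π * I * (n + a) * x)

noncomputable def thetaChar (a x τ : ℂ) : ℂ := ∑' n : ℤ, thetaCharTerm a x τ n

theorem thetaCharTerm_eq_mul_jacobiTheta₂_term (a x τ : ℂ) (n : ℤ) :
    thetaCharTerm a x τ n =
      cexp (π * I * a ^ 2 * τ + 2 * π * I * a * x) * jacobiTheta₂_term n (x + a * τ) τ := by
  rw [thetaCharTerm, jacobiTheta₂_term, ← Complex.exp_add]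
  congr 1
  ring

theorem summable_norm_thetaCharTerm {τ : ℂ} (hτ : 0 < τ.im) (a x : ℂ) :
    Summable fun n ↦ ‖thetaCharTerm a x τ n‖ := by
  simp only [thetaCharTerm_eq_mul_jacobiTheta₂_term, norm_mul]
  exact (summable_norm_iff.mpr ((summable_jacobiTheta₂_term_iff _ _).mpr hτ)).mul_left _

theorem thetaCharTerm_mul_thetaCharTerm (a b x y τ : ℂ) (ε j k : ℤ) :
    thetaCharTerm a (x + y) τ (j + k + ε) * thetaCharTerm b (x - y) τ (j - k) =
      thetaCharTerm ((a + b + ε) / 2) (2 * x) (2 * τ) j *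
        thetaCharTerm ((a - b + ε) / 2) (2 * y) (2 * τ) k := by
  simp only [thetaCharTerm, ← Complex.exp_add]
  congr 1
  push_cast
  ring

def parityEquiv : (ℤ × ℤ) ⊕ (ℤ × ℤ) ≃ ℤ × ℤ where
  toFun := Sum.elim (fun p ↦ (p.1 + p.2, p.1 - p.2)) (fun p ↦ (p.1 + p.2 + 1, p.1 - p.2))
  invFun q :=
    if (q.1 + q.2) % 2 = 0 then .inl ((q.1 + q.2) / 2, (q.1 - q.2) / 2)
    else .inr ((q.1 + q.2 - 1) / 2, (q.1 - q.2 - 1) / 2)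
  left_inv := by
    rintro (⟨j, k⟩ | ⟨j, k⟩)
    · dsimp only [Sum.elim_inl]
      rw [if_pos (by omega)]
      simp only [Sum.inl.injEq, Prod.mk.injEq]
      omega
    · dsimp only [Sum.elim_inr]
      rw [if_neg (by omega)]
      simp only [Sum.inr.injEq, Prod.mk.injEq]
      omega
  right_inv := by
    rintro ⟨m, n⟩
    dsimp only
    split_ifs <;> simp <;> omega

theorem thetaChar_mul_thetaChar {τ : ℂ} (hτ : 0 < τ.im) (a b x y : ℂ) :
    thetaChar a (x + y) τ * thetaChar b (x - y) τ =
      thetaChar ((a + b) / 2) (2 * x) (2 * τ) * thetaChar ((a - b) / 2) (2 * y) (2 * τ) +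
        thetaChar ((a + b + 1) / 2) (2 * x) (2 * τ) *
          thetaChar ((a - b + 1) / 2) (2 * y) (2 * τ) := by
  have h2τ : 0 < (2 * τ).im := by simpa using hτ
  have hprod := summable_mul_of_summable_norm (summable_norm_thetaCharTerm hτ a (x + y))
    (summable_norm_thetaCharTerm hτ b (x - y))
  rw [← parityEquiv.summable_iff] at hprod
  simp only [thetaChar]
  rw [tsum_mul_tsum_of_summable_norm (summable_norm_thetaCharTerm hτ _ _)
      (summable_norm_thetaCharTerm hτ _ _),
    tsum_mul_tsum_of_summable_norm (summable_norm_thetaCharTerm h2τ _ _)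
      (summable_norm_thetaCharTerm h2τ _ _),
    tsum_mul_tsum_of_summable_norm (summable_norm_thetaCharTerm h2τ _ _)
      (summable_norm_thetaCharTerm h2τ _ _),
    ← parityEquiv.tsum_eq, Summable.tsum_sum]
  · congr 1 <;> refine tsum_congr fun p ↦ ?_
    · simpa [parityEquiv] using thetaCharTerm_mul_thetaCharTerm a b x y τ 0 p.1 p.2
    · simpa [parityEquiv] using thetaCharTerm_mul_thetaCharTerm a b x y τ 1 p.1 p.2
  · exact hprod.comp_injective Sum.inl_injective
  · exact hprod.comp_injective Sum.inr_injective

theorem thetaChar_char_add_int (a x τ : ℂ) (m : ℤ) :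
    thetaChar (a + m) x τ = thetaChar a x τ := by
  rw [thetaChar, thetaChar, ← (Equiv.addRight m).tsum_eq (thetaCharTerm a x τ)]
  refine tsum_congr fun n ↦ ?_
  simp only [thetaCharTerm, Equiv.coe_addRight, Int.cast_add]
  congr 1
  ring

theorem thetaChar_neg (a x τ : ℂ) : thetaChar (-a) (-x) τ = thetaChar a x τ := by
  rw [thetaChar, thetaChar, ← (Equiv.neg ℤ).tsum_eq (thetaCharTerm a x τ)]
  refine tsum_congr fun n ↦ ?_
  simp only [thetaCharTerm, Equiv.neg_apply, Int.cast_neg]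
  congr 1
  ring

theorem thetaChar_arg_add_int (a x τ : ℂ) (m : ℤ) :
    thetaChar a (x + m) τ = cexp (2 * π * I * a * m) * thetaChar a x τ := by
  rw [thetaChar, thetaChar, ← tsum_mul_left]
  refine tsum_congr fun n ↦ ?_
  rw [thetaCharTerm, thetaCharTerm, ← Complex.exp_add]
  rw [show π * I * (n + a) ^ 2 * τ + 2 * π * I * (n + a) * (x + m) =
      2 * π * I * a * m + (π * I * (n + a) ^ 2 * τ + 2 * π * I * (n + a) * x) +
        ((n * m : ℤ) : ℂ) * (2 * π * I) by push_cast; ring,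
    Complex.exp_add, exp_int_mul_two_pi_mul_I, mul_one]

theorem theta_eq_thetaChar (k : ℤ) (z τ : ℂ) :
    theta k z τ = thetaChar (k / 3 - 1 / 6) (3 * z + 3 / 2) (3 * τ) := by
  refine tsum_congr fun n ↦ ?_
  rw [thetaCharTerm, ← Complex.exp_add]
  congr 1
  ring

/-- Indexed by `ZMod 6` since `θ[r/6]` depends only on `r mod 6` (`thetaChar_char_add_int`): this
lets `reduce_mod_char` recognise equal characteristics. -/
noncomputable def thetaSix (r : ZMod 6) (x τ : ℂ) : ℂ := thetaChar ((r.val : ℂ) / 6) x (6 * τ)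

theorem thetaSix_intCast (r : ℤ) (x τ : ℂ) :
    thetaSix r x τ = thetaChar (r / 6) x (6 * τ) := by
  have hval : ((r : ZMod 6).val : ℂ) = ((r % 6 : ℤ) : ℂ) := by
    exact_mod_cast ZMod.val_intCast r
  have hdiv : ((r % 6 : ℤ) : ℂ) + 6 * ((r / 6 : ℤ) : ℂ) = r := by
    exact_mod_cast Int.emod_add_mul_ediv r 6
  rw [thetaSix, hval, ← thetaChar_char_add_int _ _ _ (r / 6)]
  congr 1
  linear_combination hdiv / 6

theorem thetaSix_intCast_add_three (r : ℤ) (x τ : ℂ) :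
    thetaSix r (x + 3) τ = (-1) ^ r * thetaSix r x τ := by
  rw [thetaSix_intCast, thetaSix_intCast, show x + 3 = x + ((3 : ℤ) : ℂ) by norm_num,
    thetaChar_arg_add_int,
    show 2 * π * I * (r / 6) * ((3 : ℤ) : ℂ) = r * (π * I) by push_cast; ring, exp_int_mul,
    exp_pi_mul_I]

theorem thetaSix_neg_zero (r : ZMod 6) (τ : ℂ) : thetaSix (-r) 0 τ = thetaSix r 0 τ := by
  obtain ⟨m, rfl⟩ := ZMod.intCast_surjective r
  rw [← Int.cast_neg, thetaSix_intCast, thetaSix_intCast, Int.cast_neg, neg_div]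
  simpa using thetaChar_neg ((m : ℂ) / 6) 0 (6 * τ)

theorem theta_mul_theta {τ : ℂ} (hτ : 0 < τ.im) (j k : ℤ) (ζ η : ℂ) :
    theta j (ζ + η) τ * theta k (ζ - η) τ =
      thetaSix ((j + k - 1 : ℤ) : ZMod 6) (6 * ζ + 3) τ *
          thetaSix ((j - k : ℤ) : ZMod 6) (6 * η) τ +
        thetaSix ((j + k + 2 : ℤ) : ZMod 6) (6 * ζ + 3) τ *
          thetaSix ((j - k + 3 : ℤ) : ZMod 6) (6 * η) τ := by
  have h3τ : 0 < (3 * τ).im := by simpa using hτ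
  rw [theta_eq_thetaChar, theta_eq_thetaChar,
    show 3 * (ζ + η) + 3 / 2 = 3 * ζ + 3 / 2 + 3 * η by ring,
    show 3 * (ζ - η) + 3 / 2 = 3 * ζ + 3 / 2 - 3 * η by ring, thetaChar_mul_thetaChar h3τ]
  simp only [thetaSix_intCast]
  congr 3 <;> push_cast <;> ring

theorem theta_mul_theta_self {τ : ℂ} (hτ : 0 < τ.im) (j k : ℤ) (z : ℂ) :
    theta j z τ * theta k z τ =
      thetaSix ((j + k - 1 : ℤ) : ZMod 6) (6 * z + 3) τ *
          thetaSix ((j - k : ℤ) : ZMod 6) 0 τ +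
        thetaSix ((j + k + 2 : ℤ) : ZMod 6) (6 * z + 3) τ *
          thetaSix ((j - k + 3 : ℤ) : ZMod 6) 0 τ := by
  simpa using theta_mul_theta hτ j k z 0

theorem addition_formulae_third_triple (τ : ℂ) (hτ : 0 < τ.im) (z w : ℂ) :
    (theta 0 0 τ) ^ 2 * theta 0 (z + w) τ * theta 2 (z - w) τ =
      theta 0 z τ * theta 2 z τ * (theta 1 w τ) ^ 2
        - (theta 1 z τ) ^ 2 * theta 0 w τ * theta 2 w τ ∧
    (theta 0 0 τ) ^ 2 * theta 1 (z + w) τ * theta 2 (z - w) τ =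
      theta 1 z τ * theta 2 z τ * (theta 0 w τ) ^ 2
        - (theta 0 z τ) ^ 2 * theta 1 w τ * theta 2 w τ ∧
    (theta 0 0 τ) ^ 2 * theta 2 (z + w) τ * theta 2 (z - w) τ =
      theta 0 z τ * theta 1 z τ * (theta 2 w τ) ^ 2
        - (theta 2 z τ) ^ 2 * theta 0 w τ * theta 1 w τ := by
  refine ⟨?_, ?_, ?_⟩ <;>
  · rw [mul_assoc (theta 0 0 τ ^ 2), mul_assoc (_ ^ 2)]
    simp only [sq, theta_mul_theta hτ, theta_mul_theta_self hτ, thetaSix_intCast_add_three]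
    norm_num [thetaSix_neg_zero]
    reduce_mod_char
    ring
end

section
/- Let K > 0 and δ ∈ (0, 1/6), and set R_δ := ⋃_{j=1}^{3} [(j−1)/3 + δ, j/3 − δ]. As ε → 0⁺, the functions a ↦ ε·log|θ₀(−aτ_ε, τ_ε)/θ₂(−aτ_ε, τ_ε)| and a ↦ ε·log|θ₁(−aτ_ε, τ_ε)/θ₂(−aτ_ε, τ_ε)| (which are well defined on R_δ for ε small, since all θ_k(−aτ_ε, τ_ε) ≠ 0 there) converge uniformly on R_δ to a ↦ c̃(3Ka) and a ↦ s̃(3Ka), respectively. -/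
open Complex

/-- The parameter `τ_ε = −3K/(9K + 2πiε)`. -/
noncomputable def tauE (K ε : ℝ) : ℂ :=
  -3 * K / (9 * K + 2 * Real.pi * Complex.I * ε)

/-- The ultradiscrete elliptic function `c̃`. -/
noncomputable def ctilde (K u : ℝ) : ℝ :=
  -(9 * K / 2) * (Int.fract ((u - K) / (3 * K)) - 1 / 2) ^ 2
    + (9 * K / 2) * (Int.fract (u / (3 * K)) - 1 / 2) ^ 2

/-- The ultradiscrete elliptic function `s̃`. -/
noncomputable def stilde (K u : ℝ) : ℝ :=
  -(9 * K / 2) * (Int.fract ((u - 2 * K) / (3 * K)) - 1 / 2) ^ 2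
    + (9 * K / 2) * (Int.fract (u / (3 * K)) - 1 / 2) ^ 2

/-- The compact set `R_δ = ⋃_{j=1}^{3} [(j−1)/3 + δ, j/3 − δ]`. -/
def Rdelta (δ : ℝ) : Set ℝ :=
  Set.Icc δ (1 / 3 - δ) ∪ Set.Icc (1 / 3 + δ) (2 / 3 - δ) ∪ Set.Icc (2 / 3 + δ) (1 - δ)

/-! The functional equation of `jacobiTheta₂`, applied at `3τ_ε` (where `-1/(3τ_ε) = 1 + iξ_ε`) and
again at `iξ_ε`, writes every `θ_k(-aτ_ε, τ_ε)` as one nonzero factor, common to all `k`, times the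
periodized Gaussian `G_ξ(z) = ∑ₙ exp(-π(z - n)²/ξ)` at `z_k = k/3 - a - 7/6 - (3/2)iξ_ε`.
For `a ∈ R_δ` the point `Re z_k` keeps distance `δ` from `ℤ + 1/2`, so once `exp(-2πδ/ξ) ≤ 1/5` the
term of `G_ξ(z_k)` with `n` nearest to `Re z_k` dominates the sum up to a factor `2`. Hence
`log |θ_k| = C - π dist(Re z_k, ℤ)²/ξ` up to `log 2`, with `C` independent of `k`, and since
`επ/ξ_ε = 9K/2`, `ε log |θ_k/θ_l|` is the difference of two quadratic sawtooth functions, which is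
`c̃(3Ka)` or `s̃(3Ka)`, up to `2ε log 2`. -/

open Filter Topology Set
open scoped Real

lemma hasSum_pow_natAbs {q : ℝ} (hq₀ : 0 ≤ q) (hq₁ : q < 1) :
    HasSum (fun n : ℤ => q ^ n.natAbs) ((1 + q) / (1 - q)) := by
  have hpos : HasSum (fun n : ℕ => q ^ (n : ℤ).natAbs) (1 - q)⁻¹ := by
    simpa using hasSum_geometric_of_lt_one hq₀ hq₁
  have hneg : HasSum (fun n : ℕ => q ^ (-((n : ℤ) + 1)).natAbs) (q * (1 - q)⁻¹) := by
    have hexp : (fun n : ℕ => q ^ (-((n : ℤ) + 1)).natAbs) = fun n => q * q ^ n := by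
      ext n
      rw [← pow_succ']
      congr 1
    rw [hexp]
    exact (hasSum_geometric_of_lt_one hq₀ hq₁).mul_left q
  rw [show (1 + q) / (1 - q) = (1 - q)⁻¹ + q * (1 - q)⁻¹ by ring]
  exact hpos.of_nat_of_neg_add_one hneg

lemma ne_zero_and_abs_log_norm_sub_le_log_two {E : Type*} [NormedAddCommGroup E] {x y : E}
    (hy : y ≠ 0) (hxy : ‖x - y‖ ≤ ‖y‖ / 2) :
    x ≠ 0 ∧ |Real.log ‖x‖ - Real.log ‖y‖| ≤ Real.log 2 := by
  have hy' : 0 < ‖y‖ := norm_pos_iff.mpr hy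
  have hlow : ‖y‖ / 2 ≤ ‖x‖ := by linarith [norm_sub_norm_le y x, norm_sub_rev x y]
  have hup : ‖x‖ ≤ 2 * ‖y‖ := by linarith [norm_sub_norm_le x y]
  have hx' : 0 < ‖x‖ := by linarith
  refine ⟨norm_pos_iff.mp hx', abs_sub_le_iff.mpr ⟨?_, ?_⟩⟩
  · rw [← Real.log_div hx'.ne' hy'.ne']
    exact Real.log_le_log (by positivity) (by rwa [div_le_iff₀ hy'])
  · rw [← Real.log_div hy'.ne' hx'.ne']
    exact Real.log_le_log (by positivity) (by rw [div_le_iff₀ hx']; linarith)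

noncomputable def periodizedGaussian (ξ : ℝ) (z : ℂ) : ℂ :=
  ∑' n : ℤ, cexp (-π * (z - n) ^ 2 / ξ)

section PeriodizedGaussian

lemma periodizedGaussian_sub_intCast (ξ : ℝ) (z : ℂ) (m : ℤ) :
    periodizedGaussian ξ (z - m) = periodizedGaussian ξ z := by
  rw [periodizedGaussian, ← (Equiv.subRight m).tsum_eq]
  refine tsum_congr fun n => ?_
  simp only [Equiv.subRight_apply, Int.cast_sub, sub_sub_sub_cancel_right]

lemma norm_cexp_neg_pi_mul_sq_div (ξ : ℝ) (w : ℂ) :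
    ‖cexp (-π * w ^ 2 / ξ)‖ = rexp (-π * (w.re ^ 2 - w.im ^ 2) / ξ) := by
  rw [Complex.norm_exp]
  congr 1
  simp [Complex.div_ofReal_re, pow_two]

variable {ξ δ : ℝ} {z : ℂ}

lemma norm_cexp_neg_pi_mul_sub_intCast_sq_div_le (hξ : 0 < ξ) (hz : |z.re| ≤ 1 / 2 - δ) (n : ℤ) :
    ‖cexp (-π * (z - n) ^ 2 / ξ)‖ ≤
      ‖cexp (-π * z ^ 2 / ξ)‖ * rexp (-(2 * π * δ) / ξ) ^ n.natAbs := by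
  have hshift : 2 * δ * |(n : ℝ)| ≤ (z.re - n) ^ 2 - z.re ^ 2 := by
    have hn : |(n : ℝ)| * (|(n : ℝ)| - 1) ≥ 0 := by
      rcases eq_or_ne n 0 with rfl | hn
      · simp
      · have : (1 : ℝ) ≤ |(n : ℝ)| := by exact_mod_cast Int.one_le_abs hn
        nlinarith
    have hcross : (n : ℝ) * z.re ≤ |(n : ℝ)| * (1 / 2 - δ) := by
      calc (n : ℝ) * z.re ≤ |(n : ℝ)| * |z.re| := (le_abs_self _).trans (abs_mul _ _).le
        _ ≤ _ := mul_le_mul_of_nonneg_left hz (abs_nonneg _)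
    nlinarith [sq_abs (n : ℝ)]
  rw [norm_cexp_neg_pi_mul_sq_div, norm_cexp_neg_pi_mul_sq_div, ← Real.exp_nat_mul, ← Real.exp_add,
    Real.exp_le_exp, Nat.cast_natAbs, Int.cast_abs]
  simp only [Complex.sub_re, Complex.intCast_re, Complex.sub_im, Complex.intCast_im, sub_zero]
  rw [← sub_nonneg]
  have hgap : 0 ≤ π * ((z.re - n) ^ 2 - z.re ^ 2 - 2 * δ * |(n : ℝ)|) / ξ :=
    div_nonneg (mul_nonneg Real.pi_pos.le (by linarith)) hξ.le
  convert hgap using 1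
  field_simp
  ring

lemma norm_periodizedGaussian_sub_le (hξ : 0 < ξ) (hz : |z.re| ≤ 1 / 2 - δ)
    (hq : rexp (-(2 * π * δ) / ξ) ≤ 1 / 5) :
    ‖periodizedGaussian ξ z - cexp (-π * z ^ 2 / ξ)‖ ≤ ‖cexp (-π * z ^ 2 / ξ)‖ / 2 := by
  set q := rexp (-(2 * π * δ) / ξ)
  have hq₁ : q < 1 := by linarith
  have hbound := norm_cexp_neg_pi_mul_sub_intCast_sq_div_le hξ hz
  have hmajorant := (hasSum_pow_natAbs (Real.exp_nonneg _) hq₁).mul_left ‖cexp (-π * z ^ 2 / ξ)‖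
  have hf : HasSum (fun n : ℤ => cexp (-π * (z - n) ^ 2 / ξ)) (periodizedGaussian ξ z) :=
    (Summable.of_norm_bounded hmajorant.summable hbound).hasSum
  have htail := (hf.update 0 0).norm_le_of_bounded (hmajorant.update 0 0) fun n => by
    rcases eq_or_ne n 0 with rfl | hn
    · simp
    · simpa [Function.update_of_ne hn] using hbound n
  simp only [Int.cast_zero, sub_zero, Int.natAbs_zero, pow_zero, mul_one, zero_sub,
    neg_add_eq_sub] at htail
  refine htail.trans ?_
  have : (1 + q) / (1 - q) ≤ 3 / 2 := by rw [div_le_iff₀ (by linarith)]; linarith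
  nlinarith [norm_nonneg (cexp (-π * z ^ 2 / ξ))]

lemma periodizedGaussian_ne_zero_and_abs_log_norm_sub_le (hξ : 0 < ξ)
    (hq : rexp (-(2 * π * δ) / ξ) ≤ 1 / 5) (hz : Int.fract (z.re + 1 / 2) ∈ Icc δ (1 - δ)) :
    periodizedGaussian ξ z ≠ 0 ∧
      |Real.log ‖periodizedGaussian ξ z‖ -
        π * (z.im ^ 2 - (Int.fract (z.re + 1 / 2) - 1 / 2) ^ 2) / ξ| ≤ Real.log 2 := by
  set w := z - ⌊z.re + 1 / 2⌋
  have hw_re : w.re = Int.fract (z.re + 1 / 2) - 1 / 2 := by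
    simp only [w, Complex.sub_re, Complex.intCast_re, Int.fract]
    ring
  have hw_im : w.im = z.im := by simp [w]
  have hw : |w.re| ≤ 1 / 2 - δ := by rw [hw_re, abs_le]; constructor <;> linarith [hz.1, hz.2]
  rw [← periodizedGaussian_sub_intCast ξ z ⌊z.re + 1 / 2⌋, ← hw_re, ← hw_im]
  have hlog : Real.log ‖cexp (-π * w ^ 2 / ξ)‖ = π * (w.im ^ 2 - w.re ^ 2) / ξ := by
    rw [norm_cexp_neg_pi_mul_sq_div, Real.log_exp]; ring
  rw [← hlog]
  exact ne_zero_and_abs_log_norm_sub_le_log_two (Complex.exp_ne_zero _)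
    (norm_periodizedGaussian_sub_le hξ hw hq)

end PeriodizedGaussian

lemma theta_eq_jacobiTheta₂ (k : ℤ) (z τ : ℂ) :
    theta k z τ = cexp (π * I * (k / 3 - 1 / 6) ^ 2 * (3 * τ)
        + 2 * π * I * (k / 3 - 1 / 6) * (3 * z + 3 / 2)) *
      jacobiTheta₂ ((k / 3 - 1 / 6) * (3 * τ) + (3 * z + 3 / 2)) (3 * τ) := by
  rw [theta, jacobiTheta₂, ← tsum_mul_left]
  refine tsum_congr fun n => ?_
  rw [jacobiTheta₂_term, ← Complex.exp_add, ← Complex.exp_add]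
  ring_nf

lemma theta_eq_jacobiTheta₂_neg_inv (k : ℤ) (z : ℂ) {τ : ℂ} (hτ : τ ≠ 0) :
    theta k z τ = 1 / (-I * (3 * τ)) ^ (1 / 2 : ℂ) * cexp (-π * I * (3 * z + 3 / 2) ^ 2 / (3 * τ)) *
      jacobiTheta₂ (k / 3 - 1 / 6 + (3 * z + 3 / 2) / (3 * τ)) (-1 / (3 * τ)) := by
  set c : ℂ := k / 3 - 1 / 6
  set u : ℂ := 3 * z + 3 / 2
  have h3τ : 3 * τ ≠ 0 := mul_ne_zero three_ne_zero hτ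
  have hexp : cexp (π * I * c ^ 2 * (3 * τ) + 2 * π * I * c * u) *
      cexp (-π * I * (c * (3 * τ) + u) ^ 2 / (3 * τ)) = cexp (-π * I * u ^ 2 / (3 * τ)) := by
    rw [← Complex.exp_add]
    congr 1
    field_simp
    ring
  rw [theta_eq_jacobiTheta₂, jacobiTheta₂_functional_equation, add_div,
    mul_div_cancel_right₀ _ h3τ, ← hexp]
  ring

lemma jacobiTheta₂_one_add (z σ : ℂ) : jacobiTheta₂ z (1 + σ) = jacobiTheta₂ (z + 1 / 2) σ := by
  refine tsum_congr fun n => ?_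
  rw [jacobiTheta₂_term, jacobiTheta₂_term, Complex.exp_eq_exp_iff_exists_int]
  obtain ⟨m, hm⟩ := Int.even_mul_succ_self (n - 1)
  refine ⟨m, ?_⟩
  have hm' : ((n : ℂ) - 1) * n = m + m := by exact_mod_cast (by linear_combination hm)
  linear_combination (π : ℂ) * I * hm'

lemma jacobiTheta₂_I_mul (ξ : ℝ) (z : ℂ) :
    jacobiTheta₂ z (I * ξ) = periodizedGaussian ξ z / (ξ : ℂ) ^ (1 / 2 : ℂ) := by
  have hI : -I * (I * ξ) = ξ := by rw [← mul_assoc, neg_mul, I_mul_I, neg_neg, one_mul]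
  rw [jacobiTheta₂_functional_equation, hI, mul_assoc, one_div_mul_eq_div,
    periodizedGaussian, jacobiTheta₂, ← tsum_mul_left]
  congr 2 with n
  rw [jacobiTheta₂_term, ← Complex.exp_add]
  congr 1
  field_simp
  ring_nf

noncomputable def xiE (K ε : ℝ) : ℝ := 2 * π * ε / (9 * K)

section TauE

variable {K δ ε : ℝ}

lemma three_mul_tauE_ne_zero (hK : K ≠ 0) : 3 * tauE K ε ≠ 0 := by
  have hden : (9 * K + 2 * π * I * ε : ℂ) ≠ 0 := fun h => by
    simpa [hK] using congrArg Complex.re h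
  simp [tauE, hK, hden]

lemma neg_one_div_three_mul_tauE (hK : K ≠ 0) : -1 / (3 * tauE K ε) = 1 + I * xiE K ε := by
  have hden : (9 * K + 2 * π * I * ε : ℂ) ≠ 0 := fun h => by
    simpa [hK] using congrArg Complex.re h
  have hK' : (K : ℂ) ≠ 0 := Complex.ofReal_ne_zero.mpr hK
  rw [tauE, xiE]
  push_cast
  field_simp
  ring

lemma exists_theta_tauE_eq_mul_periodizedGaussian (hK : K ≠ 0) (hε : ε ≠ 0) (a : ℝ) :
    ∃ C ≠ 0, ∀ k : ℤ, theta k (-a * tauE K ε) (tauE K ε) =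
      C * periodizedGaussian (xiE K ε) (k / 3 - a - 7 / 6 - 3 / 2 * I * xiE K ε) := by
  set τ := tauE K ε
  set ξ := xiE K ε
  have hξ : ξ ≠ 0 := by simp [ξ, xiE, hK, hε, Real.pi_ne_zero]
  have hτ : 3 * τ ≠ 0 := three_mul_tauE_ne_zero hK
  have hτ₀ : τ ≠ 0 := right_ne_zero_of_mul hτ
  refine ⟨1 / (-I * (3 * τ)) ^ (1 / 2 : ℂ) * cexp (-π * I * (3 * (-a * τ) + 3 / 2) ^ 2 / (3 * τ)) /
    (ξ : ℂ) ^ (1 / 2 : ℂ), ?_, fun k => ?_⟩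
  · refine div_ne_zero (mul_ne_zero (one_div_ne_zero ?_) (Complex.exp_ne_zero _)) ?_ <;>
      simp [hξ, hτ]
  have harg : k / 3 - 1 / 6 + (3 * (-a * τ) + 3 / 2) / (3 * τ) + 1 / 2 =
      k / 3 - a - 7 / 6 - 3 / 2 * I * ξ := by
    rw [show 3 / 2 * I * (ξ : ℂ) = 3 / 2 * (-1 / (3 * τ)) - 3 / 2 by
      rw [neg_one_div_three_mul_tauE hK]; ring]
    field_simp
    ring
  rw [theta_eq_jacobiTheta₂_neg_inv _ _ hτ₀, neg_one_div_three_mul_tauE hK,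
    jacobiTheta₂_one_add, jacobiTheta₂_I_mul, harg]
  ring

lemma exists_abs_log_norm_theta_tauE_sub_le (hK : 0 < K) (hε : 0 < ε)
    (hq : rexp (-(2 * π * δ) / xiE K ε) ≤ 1 / 5) (a : ℝ) :
    ∃ L : ℝ, ∀ k : ℤ, Int.fract (k / 3 - a - 2 / 3) ∈ Icc δ (1 - δ) →
      theta k (-a * tauE K ε) (tauE K ε) ≠ 0 ∧
      |Real.log ‖theta k (-a * tauE K ε) (tauE K ε)‖ -
        (L - π * (Int.fract (k / 3 - a - 2 / 3) - 1 / 2) ^ 2 / xiE K ε)| ≤ Real.log 2 := by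
  have hξ : 0 < xiE K ε := by unfold xiE; positivity
  obtain ⟨C, hC, hθ⟩ := exists_theta_tauE_eq_mul_periodizedGaussian hK.ne' hε.ne' a
  refine ⟨Real.log ‖C‖ + π * (3 / 2 * xiE K ε) ^ 2 / xiE K ε, fun k hk => ?_⟩
  set z : ℂ := k / 3 - a - 7 / 6 - 3 / 2 * I * xiE K ε
  have hz_re : z.re + 1 / 2 = k / 3 - a - 2 / 3 := by simp [z]; ring
  have hz_im : z.im = -(3 / 2 * xiE K ε) := by simp [z]
  obtain ⟨hG, hlog⟩ := periodizedGaussian_ne_zero_and_abs_log_norm_sub_le hξ hq (hz_re ▸ hk)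
  refine ⟨hθ k ▸ mul_ne_zero hC hG, ?_⟩
  rw [hθ k, norm_mul, Real.log_mul (norm_ne_zero_iff.mpr hC) (norm_ne_zero_iff.mpr hG)]
  rw [hz_re, hz_im] at hlog
  convert hlog using 2
  ring

lemma abs_mul_log_norm_theta_div_sub_le (hK : 0 < K) (hε : 0 < ε)
    (hq : rexp (-(2 * π * δ) / xiE K ε) ≤ 1 / 5) {a : ℝ} {k l : ℤ}
    (hk : Int.fract (k / 3 - a - 2 / 3) ∈ Icc δ (1 - δ))
    (hl : Int.fract (l / 3 - a - 2 / 3) ∈ Icc δ (1 - δ)) :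
    theta k (-a * tauE K ε) (tauE K ε) ≠ 0 ∧
    |ε * Real.log ‖theta k (-a * tauE K ε) (tauE K ε) / theta l (-a * tauE K ε) (tauE K ε)‖ -
      9 * K / 2 * ((Int.fract (l / 3 - a - 2 / 3) - 1 / 2) ^ 2 -
        (Int.fract (k / 3 - a - 2 / 3) - 1 / 2) ^ 2)| ≤ 2 * ε * Real.log 2 := by
  obtain ⟨L, hL⟩ := exists_abs_log_norm_theta_tauE_sub_le hK hε hq a
  obtain ⟨hθk, hk⟩ := hL k hk
  obtain ⟨hθl, hl⟩ := hL l hl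
  refine ⟨hθk, ?_⟩
  have hscale : ε * (π / xiE K ε) = 9 * K / 2 := by
    unfold xiE; field_simp
  rw [norm_div, Real.log_div (norm_ne_zero_iff.mpr hθk) (norm_ne_zero_iff.mpr hθl), ← hscale]
  calc _ = |ε * ((Real.log ‖theta k (-a * tauE K ε) (tauE K ε)‖ -
          (L - π * (Int.fract (k / 3 - a - 2 / 3) - 1 / 2) ^ 2 / xiE K ε)) -
        (Real.log ‖theta l (-a * tauE K ε) (tauE K ε)‖ -
          (L - π * (Int.fract (l / 3 - a - 2 / 3) - 1 / 2) ^ 2 / xiE K ε)))| := by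
        ring_nf
    _ ≤ ε * (Real.log 2 + Real.log 2) := by
        rw [abs_mul, abs_of_pos hε]
        exact mul_le_mul_of_nonneg_left ((abs_sub _ _).trans (add_le_add hk hl)) hε.le
    _ = 2 * ε * Real.log 2 := by ring

end TauE

lemma fract_mem_Icc_of_mem_Icc_div_three {x δ : ℝ} (hδ : 0 < δ) (m : ℤ)
    (hx : x ∈ Icc (m / 3 + δ) ((m + 1) / 3 - δ)) : Int.fract x ∈ Icc δ (1 - δ) := by
  have hm : (m : ℝ) = 3 * (m / 3 : ℤ) + (m % 3 : ℤ) := by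
    exact_mod_cast (Int.mul_ediv_add_emod m 3).symm
  have hs₀ : (0 : ℝ) ≤ (m % 3 : ℤ) := by exact_mod_cast Int.emod_nonneg m (by norm_num)
  have hs₂ : ((m % 3 : ℤ) : ℝ) ≤ 2 := by
    exact_mod_cast Int.lt_add_one_iff.mp (Int.emod_lt_of_pos m (by norm_num))
  have hmem : x - (m / 3 : ℤ) ∈ Icc δ (1 - δ) := by
    constructor <;> linarith [hx.1, hx.2]
  rwa [← Int.fract_sub_intCast x (m / 3),
    Int.fract_eq_self.mpr ⟨by linarith [hmem.1], by linarith [hmem.2]⟩]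

lemma exists_mem_Icc_div_three_of_mem_Rdelta {a δ : ℝ} (ha : a ∈ Rdelta δ) :
    ∃ m : ℤ, a ∈ Icc (m / 3 + δ) ((m + 1) / 3 - δ) := by
  rcases ha with (ha | ha) | ha
  · exact ⟨0, by norm_num [ha]⟩
  · exact ⟨1, by norm_num [ha]⟩
  · exact ⟨2, by norm_num [ha]⟩

lemma fract_mem_Icc_of_mem_Rdelta {a δ : ℝ} (hδ : 0 < δ) (ha : a ∈ Rdelta δ) (k : ℤ) :
    Int.fract (k / 3 - a - 2 / 3) ∈ Icc δ (1 - δ) := by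
  obtain ⟨m, hm₁, hm₂⟩ := exists_mem_Icc_div_three_of_mem_Rdelta ha
  refine fract_mem_Icc_of_mem_Icc_div_three hδ (k - m - 3) ⟨?_, ?_⟩ <;> push_cast <;> linarith

lemma sq_fract_neg_sub_half (y : ℝ) : (Int.fract (-y) - 1 / 2) ^ 2 = (Int.fract y - 1 / 2) ^ 2 := by
  rcases eq_or_ne (Int.fract y) 0 with h | h
  · rw [Int.fract_neg_eq_zero.mpr h, h]
  · rw [Int.fract_neg h]
    ring

lemma ctilde_three_mul {K : ℝ} (hK : K ≠ 0) (a : ℝ) :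
    ctilde K (3 * K * a) =
      9 * K / 2 * ((Int.fract (-a) - 1 / 2) ^ 2 - (Int.fract (-a - 2 / 3) - 1 / 2) ^ 2) := by
  rw [ctilde, show (3 * K * a - K) / (3 * K) = a - 1 / 3 by field_simp,
    show 3 * K * a / (3 * K) = a by field_simp,
    show -a - 2 / 3 = -(a - 1 / 3) + (-1 : ℤ) by push_cast; ring, Int.fract_add_intCast,
    sq_fract_neg_sub_half, sq_fract_neg_sub_half]
  ring

lemma stilde_three_mul {K : ℝ} (hK : K ≠ 0) (a : ℝ) :
    stilde K (3 * K * a) =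
      9 * K / 2 * ((Int.fract (-a) - 1 / 2) ^ 2 - (Int.fract (-a - 1 / 3) - 1 / 2) ^ 2) := by
  rw [stilde, show (3 * K * a - 2 * K) / (3 * K) = a - 2 / 3 by field_simp,
    show 3 * K * a / (3 * K) = a by field_simp,
    show -a - 1 / 3 = -(a - 2 / 3) + (-1 : ℤ) by push_cast; ring, Int.fract_add_intCast,
    sq_fract_neg_sub_half, sq_fract_neg_sub_half]
  ring

lemma eventually_exp_neg_div_xiE_le {K δ c : ℝ} (hK : 0 < K) (hδ : 0 < δ) (hc : 0 < c) :
    ∀ᶠ ε in 𝓝[>] 0, rexp (-(2 * π * δ) / xiE K ε) ≤ c := by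
  have hinv : Tendsto (fun ε : ℝ => 9 * K * δ * ε⁻¹) (𝓝[>] 0) atTop :=
    tendsto_inv_nhdsGT_zero.const_mul_atTop (by positivity)
  filter_upwards [(Real.tendsto_exp_neg_atTop_nhds_zero.comp hinv).eventually (ge_mem_nhds hc),
    self_mem_nhdsWithin] with ε hε hε₀
  refine le_of_eq_of_le ?_ hε
  simp only [Function.comp_apply, xiE]
  congr 1
  field_simp

lemma eventually_abs_mul_log_norm_theta_div_sub_le {K δ : ℝ} (hK : 0 < K) (hδ : 0 < δ) (k l : ℤ) :
    ∀ᶠ ε in 𝓝[>] 0, ∀ a ∈ Rdelta δ, theta k (-a * tauE K ε) (tauE K ε) ≠ 0 ∧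
      |ε * Real.log ‖theta k (-a * tauE K ε) (tauE K ε) / theta l (-a * tauE K ε) (tauE K ε)‖ -
        9 * K / 2 * ((Int.fract (l / 3 - a - 2 / 3) - 1 / 2) ^ 2 -
          (Int.fract (k / 3 - a - 2 / 3) - 1 / 2) ^ 2)| ≤ 2 * ε * Real.log 2 := by
  filter_upwards [eventually_exp_neg_div_xiE_le hK hδ (by norm_num : (0 : ℝ) < 1 / 5),
    self_mem_nhdsWithin] with ε hq hε a ha
  exact abs_mul_log_norm_theta_div_sub_le hK hε hq (fract_mem_Icc_of_mem_Rdelta hδ ha k)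
    (fract_mem_Icc_of_mem_Rdelta hδ ha l)

lemma tendstoUniformlyOn_of_eventually_dist_le {ι α β : Type*} [PseudoMetricSpace β]
    {F : ι → α → β} {f : α → β} {l : Filter ι} {s : Set α} {g : ι → ℝ} (hg : Tendsto g l (𝓝 0))
    (h : ∀ᶠ i in l, ∀ x ∈ s, dist (F i x) (f x) ≤ g i) : TendstoUniformlyOn F f l s := by
  refine Metric.tendstoUniformlyOn_iff.mpr fun η hη => ?_
  filter_upwards [h, hg.eventually (gt_mem_nhds hη)] with i hi hgi x hx
  exact (dist_comm (f x) (F i x)).trans_le (hi x hx) |>.trans_lt hgi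

/-- Ultradiscretization of the elliptic functions `c` and `s`: uniform convergence
on `R_δ` of `ε log|θ₀/θ₂|` and `ε log|θ₁/θ₂|` to `c̃(3Ka)` and `s̃(3Ka)` as `ε → 0⁺`. -/
theorem ultradiscrete_limit_of_ratios (K δ : ℝ) (hK : 0 < K) (hδ : δ ∈ Set.Ioo 0 (1 / 6)) :
    (∀ᶠ ε in nhdsWithin 0 (Set.Ioi (0 : ℝ)), ∀ a ∈ Rdelta δ, ∀ k ∈ ({0, 1, 2} : Set ℤ),
      theta k (-(a : ℂ) * tauE K ε) (tauE K ε) ≠ 0) ∧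
    TendstoUniformlyOn
      (fun (ε : ℝ) (a : ℝ) => ε * Real.log (Norm.norm
        (theta 0 (-(a : ℂ) * tauE K ε) (tauE K ε) / theta 2 (-(a : ℂ) * tauE K ε) (tauE K ε))))
      (fun (a : ℝ) => ctilde K (3 * K * a)) (nhdsWithin 0 (Set.Ioi (0 : ℝ))) (Rdelta δ) ∧
    TendstoUniformlyOn
      (fun (ε : ℝ) (a : ℝ) => ε * Real.log (Norm.norm
        (theta 1 (-(a : ℂ) * tauE K ε) (tauE K ε) / theta 2 (-(a : ℂ) * tauE K ε) (tauE K ε))))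
      (fun (a : ℝ) => stilde K (3 * K * a)) (nhdsWithin 0 (Set.Ioi (0 : ℝ))) (Rdelta δ) := by
  have hratio := eventually_abs_mul_log_norm_theta_div_sub_le hK hδ.1
  have herror : Tendsto (fun ε : ℝ => 2 * ε * Real.log 2) (𝓝[>] 0) (𝓝 0) :=
    tendsto_nhdsWithin_of_tendsto_nhds <|
      (by fun_prop : Continuous fun ε : ℝ => 2 * ε * Real.log 2).tendsto' 0 0 (by simp)
  refine ⟨?_, ?_, ?_⟩
  · filter_upwards [hratio 0 0, hratio 1 1, hratio 2 2] with ε h₀ h₁ h₂ a ha k hk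
    rcases hk with rfl | rfl | rfl
    exacts [(h₀ a ha).1, (h₁ a ha).1, (h₂ a ha).1]
  · refine tendstoUniformlyOn_of_eventually_dist_le herror ((hratio 0 2).mono fun ε h a ha => ?_)
    rw [Real.dist_eq, ctilde_three_mul hK.ne']
    simpa using (h a ha).2
  · refine tendstoUniformlyOn_of_eventually_dist_le herror ((hratio 1 2).mono fun ε h a ha => ?_)
    rw [Real.dist_eq, stilde_three_mul hK.ne', show -a - 1 / 3 = ((1 : ℤ) : ℝ) / 3 - a - 2 / 3 by
      push_cast; ring]
    simpa using (h a ha).2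
end

section
/- Let K > 0 and δ ∈ (0, 1/6), and set R_δ := ⋃_{j=1}^{3} [(j−1)/3 + δ, j/3 − δ]. For each k ∈ {0,1,2}, as ε → 0⁺ the function a ↦ ε·log|θ_k(−aτ_ε, τ_ε)| converges uniformly on R_δ to a ↦ −(9K/2)·(frac((3Ka − (k+1)K)/(3K)) − 1/2)², where frac(x) := x − ⌊x⌋. -/
open Complex

/-!
With `A = I / (3τ)`, completing the square writes `θ_k(z, τ)` as an exponential prefactor times
the Gaussian sum `∑ₙ exp (-π (n + w)² / A)`. For `τ = τ_ε` one has `A = ξ - I` with `ξ = ξ_ε → 0`,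
and Poisson summation applied twice (for `ξ - I`, then, after `exp (π i n²) = exp (π i n)`, for `ξ`)
turns this into a Gaussian sum with real parameter `ξ`, up to the factor `((ξ - I) / ξ) ^ (1/2)`.
After an integer shift its `n = 0` term has modulus `exp (-π (s² - 9ξ²/4) / ξ)` with
`s = 1/2 - frac (a - (k+1)/3)`, and for `a ∈ R_δ` one has `|s| ≤ 1/2 - δ`, so the remaining
terms are smaller by factors `exp (-2πδ|n|/ξ)`. Hence
`log |θ_k(-aτ_ε, τ_ε)| = -π s² / ξ + O(1 + |log ξ|)` uniformly on `R_δ`, and multiplying by `ε`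
(with `ε π / ξ = 9K/2`) gives the limit.
-/

open scoped Real
open Filter Topology

lemma norm_tsum_sub_apply_zero_le {E : Type*} [NormedAddCommGroup E] [CompleteSpace E]
    {f : ℤ → E} {C q : ℝ} (hq0 : 0 ≤ q) (hq1 : q < 1)
    (hf : ∀ m ≠ 0, ‖f m‖ ≤ C * q ^ m.natAbs) :
    ‖∑' m, f m - f 0‖ ≤ 2 * C * q / (1 - q) := by
  have hg : HasSum (fun n : ℕ => C * q ^ (n + 1)) (C * q / (1 - q)) := by
    simpa [pow_succ', mul_assoc, div_eq_mul_inv] using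
      (hasSum_geometric_of_lt_one hq0 hq1).mul_left (C * q)
  have hpos (n : ℕ) : ‖f (n + 1)‖ ≤ C * q ^ (n + 1) := hf (n + 1) (by omega)
  have hneg (n : ℕ) : ‖f (-(n + 1))‖ ≤ C * q ^ (n + 1) := hf (-(n + 1)) (by omega)
  have hpos_sum : Summable fun n : ℕ => f (n + 1) := .of_norm_bounded hg.summable hpos
  have hneg_sum : Summable fun n : ℕ => f (-(n + 1)) := .of_norm_bounded hg.summable hneg
  have hnat_sum : Summable fun n : ℕ => f n :=
    (summable_nat_add_iff 1).mp (by exact_mod_cast hpos_sum)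
  rw [tsum_of_nat_of_neg_add_one hnat_sum hneg_sum, hnat_sum.tsum_eq_zero_add]
  calc ‖f 0 + ∑' n : ℕ, f (n + 1) + ∑' n : ℕ, f (-(n + 1)) - f 0‖
      = ‖∑' n : ℕ, f (n + 1) + ∑' n : ℕ, f (-(n + 1))‖ := by congr 1; abel
    _ ≤ C * q / (1 - q) + C * q / (1 - q) :=
      (norm_add_le _ _).trans (add_le_add (tsum_of_norm_bounded hg hpos)
        (tsum_of_norm_bounded hg hneg))
    _ = 2 * C * q / (1 - q) := by ring

lemma abs_log_norm_sub_log_norm_le_log_two {E : Type*} [NormedAddCommGroup E] {x t : E}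
    (ht : t ≠ 0) (h : ‖x - t‖ ≤ ‖t‖ / 2) : |Real.log ‖x‖ - Real.log ‖t‖| ≤ Real.log 2 := by
  have ht0 : 0 < ‖t‖ := norm_pos_iff.mpr ht
  have hlow : ‖t‖ / 2 ≤ ‖x‖ := by linarith [norm_sub_norm_le t x, norm_sub_rev x t]
  have hup : ‖x‖ ≤ 2 * ‖t‖ := by linarith [norm_le_norm_add_norm_sub' x t]
  have hx0 : 0 < ‖x‖ := by linarith
  rw [← Real.log_div hx0.ne' ht0.ne', abs_le]
  constructor
  · rw [neg_le, ← Real.log_inv, inv_div]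
    exact Real.log_le_log (by positivity) ((div_le_iff₀ hx0).mpr (by linarith))
  · exact Real.log_le_log (by positivity) ((div_le_iff₀ ht0).mpr (by linarith))

lemma tendsto_mul_const_add_abs_log_const_mul_nhdsGT_zero (C : ℝ) {c : ℝ} (hc : 0 < c) :
    Tendsto (fun ε => ε * (C + |Real.log (c * ε)|)) (𝓝[>] 0) (𝓝 0) := by
  have hlog : Tendsto (fun x => |Real.log x * x|) (𝓝[>] 0) (𝓝 0) := by
    simpa using (tendsto_log_mul_rpow_nhdsGT_zero one_pos).abs
  have hmul : Tendsto (fun ε => c * ε) (𝓝[>] 0) (𝓝[>] 0) := by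
    refine tendsto_nhdsWithin_of_tendsto_nhds_of_eventually_within _ ?_ ?_
    · simpa using ((continuous_const_mul c).tendsto 0).mono_left nhdsWithin_le_nhds
    · filter_upwards [self_mem_nhdsWithin] with ε (hε : 0 < ε) using mul_pos hc hε
  have hid : Tendsto (fun ε : ℝ => ε) (𝓝[>] 0) (𝓝 0) := nhdsWithin_le_nhds
  refine ((hid.const_mul C).add ((hlog.comp hmul).const_mul c⁻¹)).congr' ?_ |>.trans (by simp)
  filter_upwards [self_mem_nhdsWithin] with ε (hε : 0 < ε)
  simp only [Function.comp_apply, abs_mul, abs_of_pos (mul_pos hc hε)]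
  field_simp

lemma tendstoUniformlyOn_of_dist_le {ι α β : Type*} [PseudoMetricSpace β] {F : ι → α → β}
    {f : α → β} {l : Filter ι} {s : Set α} {g : ι → ℝ} (hg : Tendsto g l (𝓝 0))
    (h : ∀ᶠ i in l, ∀ x ∈ s, dist (f x) (F i x) ≤ g i) : TendstoUniformlyOn F f l s :=
  Metric.tendstoUniformlyOn_iff.mpr fun _ hη =>
    (h.and (hg.eventually_lt_const hη)).mono fun _ hi x hx => (hi.1 x hx).trans_lt hi.2

noncomputable def gaussianSum (A w : ℂ) : ℂ := ∑' n : ℤ, cexp (-π / A * (n + w) ^ 2)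

lemma gaussianSum_add_intCast (A w : ℂ) (m : ℤ) : gaussianSum A (w + m) = gaussianSum A w := by
  rw [gaussianSum, gaussianSum,
    ← (Equiv.addRight m).tsum_eq fun n : ℤ => cexp (-π / A * (n + w) ^ 2)]
  exact tsum_congr fun n => by simp only [Equiv.coe_addRight]; push_cast; ring_nf

lemma cexp_pi_mul_I_mul_intCast_sq (n : ℤ) : cexp (π * I * n ^ 2) = cexp (π * I * n) := by
  obtain ⟨m, hm⟩ := Int.even_mul_succ_self (n - 1)
  have hm' : ((n : ℂ) - 1) * n = m + m := by
    simpa using congrArg (Int.cast : ℤ → ℂ) hm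
  exact Complex.exp_eq_exp_iff_exists_int.mpr ⟨m, by linear_combination π * I * hm'⟩

lemma gaussianSum_sub_I {A : ℂ} (hA : 0 < A.re) (w : ℂ) :
    gaussianSum (A - I) w =
      (A - I) ^ (1 / 2 : ℂ) / A ^ (1 / 2 : ℂ) * gaussianSum A (w - 1 / 2) := by
  have hAI : 0 < (A - I).re := by simpa using hA
  have hpow : (A - I) ^ (1 / 2 : ℂ) ≠ 0 := by
    rw [Ne, Complex.cpow_eq_zero_iff]; intro h; simp [h.1] at hAI
  have hApow : A ^ (1 / 2 : ℂ) ≠ 0 := by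
    rw [Ne, Complex.cpow_eq_zero_iff]; intro h; simp [h.1] at hA
  have h1 := Complex.tsum_exp_neg_quadratic hAI (-I * w)
  have h2 := Complex.tsum_exp_neg_quadratic hA (-I * (w - 1 / 2))
  have hIw (v : ℂ) : I * (-I * v) = v := by rw [← mul_assoc, mul_neg, I_mul_I]; ring
  simp only [hIw] at h1 h2
  have hterm (n : ℤ) : cexp (-π * (A - I) * n ^ 2 + 2 * π * (-I * w) * n) =
      cexp (-π * A * n ^ 2 + 2 * π * (-I * (w - 1 / 2)) * n) := by
    rw [show -π * (A - I) * n ^ 2 + 2 * π * (-I * w) * n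
        = -π * A * n ^ 2 - 2 * π * I * w * n + π * I * n ^ 2 by ring, Complex.exp_add,
      cexp_pi_mul_I_mul_intCast_sq, ← Complex.exp_add]
    ring_nf
  rw [tsum_congr hterm, h2] at h1
  rw [gaussianSum, gaussianSum, div_mul_eq_mul_div, eq_div_iff hApow]
  generalize (∑' n : ℤ, cexp (-π / A * (n + (w - 1 / 2)) ^ 2)) = S at h1 ⊢
  generalize (∑' n : ℤ, cexp (-π / (A - I) * (n + w) ^ 2)) = T at h1 ⊢
  field_simp at h1
  linear_combination -h1

lemma theta_eq_cexp_mul_gaussianSum (k : ℤ) (z : ℂ) {τ : ℂ} (hτ : τ ≠ 0) :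
    theta k z τ = cexp (-3 * π * I * (z + 1 / 2) ^ 2 / τ) *
      gaussianSum (I / (3 * τ)) (k / 3 - 1 / 6 + (z + 1 / 2) / τ) := by
  have hA : -π / (I / (3 * τ)) = 3 * π * I * τ := by
    rw [div_div_eq_mul_div, div_eq_iff I_ne_zero]; ring_nf; rw [I_sq]; ring
  rw [theta, gaussianSum, ← tsum_mul_left, hA]
  refine tsum_congr fun n => ?_
  rw [← Complex.exp_add, ← Complex.exp_add]
  congr 1
  field_simp
  ring

lemma norm_cexp_neg_pi_div_mul_sq (ξ x y : ℝ) :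
    ‖cexp (-π / ξ * (x + y * I) ^ 2)‖ = rexp (-π / ξ * (x ^ 2 - y ^ 2)) := by
  rw [Complex.norm_exp]
  congr 1
  have : -π / ξ * (x + y * I) ^ 2 = ((-π / ξ * (x ^ 2 - y ^ 2) : ℝ) : ℂ)
      + ((-π / ξ * (2 * x * y) : ℝ) : ℂ) * I := by
    push_cast; ring_nf; rw [I_sq]; ring
  rw [this, Complex.add_re, Complex.ofReal_re, Complex.re_ofReal_mul, I_re, mul_zero, add_zero]

lemma two_mul_mul_abs_le_add_sq_sub_sq {δ s : ℝ} (hs : |s| ≤ 1 / 2 - δ) {m : ℤ} (hm : m ≠ 0) :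
    2 * δ * |(m : ℝ)| ≤ (m + s) ^ 2 - s ^ 2 := by
  have h1 : (1 : ℝ) ≤ |(m : ℝ)| := by exact_mod_cast Int.one_le_abs hm
  have h2 : -(|(m : ℝ)| * |s|) ≤ m * s := by rw [← abs_mul]; exact neg_abs_le _
  nlinarith [sq_abs (m : ℝ), abs_nonneg s]

lemma norm_gaussianSum_sub_le {ξ δ s : ℝ} (hξ : 0 < ξ) (hs : |s| ≤ 1 / 2 - δ)
    (hq : rexp (-2 * π * δ / ξ) ≤ 1 / 5) (y : ℝ) :
    ‖gaussianSum ξ (s + y * I) - cexp (-π / ξ * (s + y * I) ^ 2)‖ ≤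
      rexp (-π / ξ * (s ^ 2 - y ^ 2)) / 2 := by
  set C := rexp (-π / ξ * (s ^ 2 - y ^ 2))
  set q := rexp (-2 * π * δ / ξ)
  have hterm (m : ℤ) (hm : m ≠ 0) :
      ‖cexp (-π / ξ * (m + (s + y * I)) ^ 2)‖ ≤ C * q ^ m.natAbs := by
    rw [← add_assoc, ← Complex.ofReal_intCast, ← Complex.ofReal_add,
      norm_cexp_neg_pi_div_mul_sq, ← Real.exp_nat_mul, ← Real.exp_add, Nat.cast_natAbs,
      Int.cast_abs, Real.exp_le_exp]
    have := two_mul_mul_abs_le_add_sq_sub_sq hs hm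
    have hπξ : 0 ≤ π / ξ := by positivity
    field_simp
    nlinarith
  have h := norm_tsum_sub_apply_zero_le (Real.exp_pos _).le (by linarith) hterm
  simp only [Int.cast_zero, zero_add] at h
  refine h.trans ?_
  rw [div_le_div_iff₀ (by linarith) two_pos]
  nlinarith [Real.exp_pos (-π / ξ * (s ^ 2 - y ^ 2))]

lemma gaussianSum_ne_zero {ξ δ s : ℝ} (hξ : 0 < ξ) (hs : |s| ≤ 1 / 2 - δ)
    (hq : rexp (-2 * π * δ / ξ) ≤ 1 / 5) (y : ℝ) : gaussianSum ξ (s + y * I) ≠ 0 := by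
  intro h
  have := norm_gaussianSum_sub_le hξ hs hq y
  rw [h, zero_sub, norm_neg, norm_cexp_neg_pi_div_mul_sq] at this
  linarith [Real.exp_pos (-π / ξ * (s ^ 2 - y ^ 2))]

lemma abs_log_norm_gaussianSum_add_le {ξ δ s : ℝ} (hξ : 0 < ξ) (hs : |s| ≤ 1 / 2 - δ)
    (hq : rexp (-2 * π * δ / ξ) ≤ 1 / 5) (y : ℝ) :
    |Real.log ‖gaussianSum ξ (s + y * I)‖ + π / ξ * (s ^ 2 - y ^ 2)| ≤ Real.log 2 := by
  have h := norm_gaussianSum_sub_le hξ hs hq y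
  rw [← norm_cexp_neg_pi_div_mul_sq] at h
  have := abs_log_norm_sub_log_norm_le_log_two (Complex.exp_ne_zero _) h
  rwa [norm_cexp_neg_pi_div_mul_sq, Real.log_exp, neg_div, neg_mul, sub_neg_eq_add] at this

section

variable {ξ : ℝ} {τ : ℂ}

lemma ne_zero_of_I_div_eq (hτ : I / (3 * τ) = ξ - I) : τ ≠ 0 := by
  rintro rfl
  simpa using congrArg Complex.im hτ

lemma inv_eq_of_I_div_eq (hτ : I / (3 * τ) = ξ - I) : τ⁻¹ = -3 - 3 * ξ * I := by
  have hτ0 := ne_zero_of_I_div_eq hτ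
  rw [div_eq_iff (by simpa using hτ0)] at hτ
  field_simp
  linear_combination (-I) * hτ + (1 + 3 * τ) * I_sq

lemma theta_neg_mul_eq (k : ℤ) (a : ℝ) (hξ : 0 < ξ) (hτ : I / (3 * τ) = ξ - I) :
    theta k (-a * τ) τ = cexp (-3 * π * I * (-a * τ + 1 / 2) ^ 2 / τ) *
      ((ξ - I) ^ (1 / 2 : ℂ) / (ξ : ℂ) ^ (1 / 2 : ℂ) *
        gaussianSum ξ (k / 3 - a - 13 / 6 - 3 / 2 * ξ * I)) := by
  have hτ0 := ne_zero_of_I_div_eq hτ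
  rw [theta_eq_cexp_mul_gaussianSum k _ hτ0, hτ, gaussianSum_sub_I (by simpa using hξ)]
  have : (-a * τ + 1 / 2) / τ = -a + τ⁻¹ / 2 := by field_simp
  rw [this, inv_eq_of_I_div_eq hτ]
  ring_nf

lemma re_theta_prefactor (a : ℝ) (hτ : I / (3 * τ) = ξ - I) :
    (-3 * π * I * (-a * τ + 1 / 2) ^ 2 / τ).re =
      π * a ^ 2 * ξ / (ξ ^ 2 + 1) - 9 * π * ξ / 4 := by
  have hτ0 := ne_zero_of_I_div_eq hτ
  have hinv := inv_eq_of_I_div_eq hτ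
  have hτ' : τ = (-3 - 3 * ξ * I)⁻¹ := by rw [← hinv, inv_inv]
  rw [show -3 * π * I * (-a * τ + 1 / 2) ^ 2 / τ = -3 * π * I * (a ^ 2 * τ - a + τ⁻¹ / 4) by
      field_simp; ring,
    hinv, hτ']
  simp [Complex.mul_re, Complex.mul_im, Complex.inv_im, Complex.inv_re, Complex.normSq_apply,
    sq]
  field_simp
  ring

lemma log_norm_cpow_half_div_cpow_half (hξ : 0 < ξ) :
    Real.log ‖((ξ : ℂ) - I) ^ (1 / 2 : ℂ) / (ξ : ℂ) ^ (1 / 2 : ℂ)‖ =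
      (Real.log ‖(ξ : ℂ) - I‖ - Real.log ξ) / 2 := by
  have hnorm (z : ℂ) : ‖z ^ (1 / 2 : ℂ)‖ = ‖z‖ ^ (1 / 2 : ℝ) := by
    simpa using Complex.norm_cpow_real z (1 / 2)
  have hξI : 0 < ‖(ξ : ℂ) - I‖ := norm_pos_iff.mpr fun h => by simpa using congrArg im h
  rw [norm_div, hnorm, hnorm, Complex.norm_real, Real.norm_of_nonneg hξ.le,
    Real.log_div (by positivity) (by positivity), Real.log_rpow hξI, Real.log_rpow hξ]
  ring

lemma log_norm_ofReal_sub_I_mem_Icc (hξ : 0 ≤ ξ) (hξ1 : ξ ≤ 1) :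
    Real.log ‖(ξ : ℂ) - I‖ ∈ Set.Icc 0 (Real.log 2) := by
  have h1 : 1 ≤ ‖(ξ : ℂ) - I‖ := by simpa using Complex.abs_im_le_norm ((ξ : ℂ) - I)
  have h2 : ‖(ξ : ℂ) - I‖ ≤ 2 := by
    refine (norm_sub_le _ _).trans ?_
    rw [Complex.norm_real, Real.norm_of_nonneg hξ, Complex.norm_I]
    linarith
  exact ⟨Real.log_nonneg h1, Real.log_le_log (by linarith) h2⟩

lemma log_norm_theta_neg_mul_eq (k : ℤ) (a : ℝ) (hξ : 0 < ξ) (hτ : I / (3 * τ) = ξ - I)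
    (hG : gaussianSum ξ (k / 3 - a - 13 / 6 - 3 / 2 * ξ * I) ≠ 0) :
    Real.log ‖theta k (-a * τ) τ‖ = π * a ^ 2 * ξ / (ξ ^ 2 + 1) - 9 * π * ξ / 4 +
      (Real.log ‖(ξ : ℂ) - I‖ - Real.log ξ) / 2 +
        Real.log ‖gaussianSum ξ (k / 3 - a - 13 / 6 - 3 / 2 * ξ * I)‖ := by
  have hξI : (ξ : ℂ) - I ≠ 0 := fun h => by simpa using congrArg im h
  rw [theta_neg_mul_eq k a hξ hτ, norm_mul, norm_mul,
    Real.log_mul (by simp) (by simp [hξI, hξ.ne', hG]),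
    Real.log_mul (by simp [hξI, hξ.ne']) (by simpa),
    Complex.norm_exp, Real.log_exp, re_theta_prefactor a hτ, log_norm_cpow_half_div_cpow_half hξ]
  ring

lemma abs_log_norm_theta_neg_mul_add_le (k : ℤ) {a δ : ℝ} (hξ : 0 < ξ)
    (hξ1 : ξ ≤ 1) (hτ : I / (3 * τ) = ξ - I) (ha : |a| ≤ 1)
    (hfract : Int.fract (a - (k + 1) / 3) ∈ Set.Icc δ (1 - δ))
    (hq : rexp (-2 * π * δ / ξ) ≤ 1 / 5) :
    |Real.log ‖theta k (-a * τ) τ‖ + π / ξ * (Int.fract (a - (k + 1) / 3) - 1 / 2) ^ 2| ≤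
      3 + |Real.log ξ| / 2 := by
  set s : ℝ := 1 / 2 - Int.fract (a - (k + 1) / 3)
  set y : ℝ := -(3 / 2 * ξ)
  -- `k / 3 - a - 13 / 6 = s - (⌊t⌋ + 3)` for `t = a - (k + 1) / 3`
  have hshift :
      gaussianSum ξ (k / 3 - a - 13 / 6 - 3 / 2 * ξ * I) = gaussianSum ξ (s + y * I) := by
    rw [← gaussianSum_add_intCast _ _ (⌊a - (k + 1) / 3⌋ + 3)]
    congr 1
    simp only [s, y, Int.fract]
    push_cast
    ring
  have hs : |s| ≤ 1 / 2 - δ := abs_le.mpr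
    ⟨by simp only [s]; linarith [hfract.2], by simp only [s]; linarith [hfract.1]⟩
  have hlog := log_norm_theta_neg_mul_eq k a hξ hτ (hshift ▸ gaussianSum_ne_zero hξ hs hq y)
  have hG := abs_log_norm_gaussianSum_add_le hξ hs hq y
  have hy : π / ξ * (s ^ 2 - y ^ 2) = π / ξ * s ^ 2 - 9 * π * ξ / 4 := by
    simp only [y]; field_simp; ring
  have hlogI := log_norm_ofReal_sub_I_mem_Icc hξ.le hξ1
  have ha2 : π * a ^ 2 * ξ / (ξ ^ 2 + 1) ∈ Set.Icc 0 (π / 2) := by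
    refine ⟨by positivity, (div_le_iff₀ (by positivity)).mpr ?_⟩
    have ha1 : a ^ 2 ≤ 1 := by nlinarith [sq_abs a, abs_nonneg a]
    calc π * a ^ 2 * ξ ≤ π * 1 * ξ := by gcongr
      _ ≤ π / 2 * (ξ ^ 2 + 1) := by nlinarith [sq_nonneg (ξ - 1), Real.pi_pos]
  rw [show (Int.fract (a - (k + 1) / 3) - 1 / 2) ^ 2 = s ^ 2 by ring, hlog, hshift]
  rw [hy, abs_le] at hG
  rw [abs_le]
  constructor <;> linarith [neg_abs_le (Real.log ξ), le_abs_self (Real.log ξ), hlogI.1, hlogI.2,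
    ha2.1, ha2.2, Real.log_two_lt_d9, Real.pi_lt_d2]

end

lemma le_abs_sub_intCast_div_three {δ a : ℝ} {i : ℤ}
    (ha : a ∈ Set.Icc (i / 3 + δ) ((i + 1) / 3 - δ)) (j : ℤ) : δ ≤ |a - j / 3| := by
  rcases le_or_gt j i with h | h
  · have : (j : ℝ) ≤ i := by exact_mod_cast h
    exact le_abs.mpr (.inl (by linarith [ha.1]))
  · have : (i : ℝ) + 1 ≤ j := by exact_mod_cast h
    exact le_abs.mpr (.inr (by linarith [ha.2]))

lemma fract_sub_intCast_div_three_mem_Icc {δ a : ℝ} (ha : a ∈ Rdelta δ) (j : ℤ) :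
    Int.fract (a - j / 3) ∈ Set.Icc δ (1 - δ) := by
  have hsep (i : ℤ) : δ ≤ |a - i / 3| := by
    rcases ha with (h | h) | h
    · exact le_abs_sub_intCast_div_three (i := 0) (by norm_num; exact h) i
    · exact le_abs_sub_intCast_div_three (i := 1) (by norm_num; exact h) i
    · exact le_abs_sub_intCast_div_three (i := 2) (by norm_num; exact h) i
  set n := ⌊a - j / 3⌋
  have h0 := hsep (j + 3 * n)
  have h1 := hsep (j + 3 * n + 3)
  have hfract : Int.fract (a - j / 3) = a - j / 3 - n := rfl
  have hnonneg := Int.fract_nonneg (a - j / 3)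
  have hlt := Int.fract_lt_one (a - j / 3)
  push_cast at h0 h1
  rw [show a - (j + 3 * n) / 3 = Int.fract (a - j / 3) by rw [hfract]; ring,
    abs_of_nonneg hnonneg] at h0
  rw [show a - (j + 3 * n + 3) / 3 = Int.fract (a - j / 3) - 1 by rw [hfract]; ring,
    abs_of_neg (by linarith)] at h1
  exact ⟨h0, by linarith⟩

lemma abs_le_one_of_mem_Rdelta {δ a : ℝ} (hδ : 0 ≤ δ) (ha : a ∈ Rdelta δ) : |a| ≤ 1 := by
  rcases ha with (h | h) | h <;> exact abs_le.mpr ⟨by linarith [h.1], by linarith [h.2]⟩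

lemma I_div_three_mul_tauE {K : ℝ} (hK : K ≠ 0) (ε : ℝ) :
    I / (3 * tauE K ε) = (2 * π * ε / (9 * K) : ℝ) - I := by
  have hden : 9 * (K : ℂ) + 2 * π * I * ε ≠ 0 := fun h => hK (by simpa using congrArg re h)
  have hK' : (K : ℂ) ≠ 0 := by exact_mod_cast hK
  rw [tauE]
  push_cast
  field_simp
  ring_nf
  rw [I_sq]
  ring

lemma exp_neg_two_mul_pi_mul_div_le {δ ξ : ℝ} (hξ : 0 < ξ) (hξδ : ξ ≤ δ) :
    rexp (-2 * π * δ / ξ) ≤ 1 / 5 := by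
  have h4 : 4 ≤ 2 * π * δ / ξ := by
    rw [le_div_iff₀ hξ]; nlinarith [Real.pi_gt_three]
  rw [neg_mul, neg_mul, neg_div, Real.exp_neg, one_div]
  gcongr
  linarith [Real.add_one_le_exp (2 * π * δ / ξ)]

theorem ultradiscrete_limit_of_theta_general (K δ : ℝ) (hK : 0 < K) (hδ : δ ∈ Set.Ioo 0 (1 / 6))
    (k : ℤ) :
    TendstoUniformlyOn
      (fun (ε : ℝ) (a : ℝ) =>
        ε * Real.log ‖theta k (-(a : ℂ) * tauE K ε) (tauE K ε)‖)
      (fun (a : ℝ) =>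
        -(9 * K / 2) * (Int.fract ((3 * K * a - ((k : ℝ) + 1) * K) / (3 * K)) - 1 / 2) ^ 2)
      (nhdsWithin 0 (Set.Ioi (0 : ℝ))) (Rdelta δ) := by
  obtain ⟨hδ0, hδ1⟩ := hδ
  set c := 2 * π / (9 * K)
  have hc : 0 < c := by positivity
  have hcε : Tendsto (fun ε => c * ε) (𝓝[>] 0) (𝓝 0) := by
    simpa using ((continuous_const_mul c).tendsto 0).mono_left nhdsWithin_le_nhds
  refine tendstoUniformlyOn_of_dist_le
    (tendsto_mul_const_add_abs_log_const_mul_nhdsGT_zero 3 hc) ?_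
  filter_upwards [self_mem_nhdsWithin, hcε.eventually_lt_const hδ0] with ε (hε : 0 < ε) hεδ a ha
  have hτ : I / (3 * tauE K ε) = ((c * ε : ℝ) : ℂ) - I := by
    rw [I_div_three_mul_tauE hK.ne']; congr 2; ring
  have hfract := fract_sub_intCast_div_three_mem_Icc ha (k + 1)
  push_cast at hfract
  have hbound := abs_log_norm_theta_neg_mul_add_le k (mul_pos hc hε) (by linarith) hτ
    (abs_le_one_of_mem_Rdelta hδ0.le ha) hfract
    (exp_neg_two_mul_pi_mul_div_le (mul_pos hc hε) hεδ.le)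
  set L := Real.log ‖theta k (-a * tauE K ε) (tauE K ε)‖
  set φ := Int.fract (a - (k + 1) / 3)
  have hdiff : -(9 * K / 2) * (Int.fract ((3 * K * a - (k + 1) * K) / (3 * K)) - 1 / 2) ^ 2
      - ε * L = -(ε * (L + π / (c * ε) * (φ - 1 / 2) ^ 2)) := by
    rw [show Int.fract ((3 * K * a - (k + 1) * K) / (3 * K)) = φ by congr 1; field_simp]
    simp only [c]
    field_simp
    ring
  rw [Real.dist_eq, hdiff, abs_neg, abs_mul, abs_of_pos hε]
  gcongr
  linarith [abs_nonneg (Real.log (c * ε))]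

/-- Ultradiscretization of the level-three theta functions: uniform convergence on `R_δ`
of `ε log|θ_k(−aτ_ε, τ_ε)|` to `−(9K/2)(frac((3Ka−(k+1)K)/(3K)) − 1/2)²` as `ε → 0⁺`. -/
theorem ultradiscrete_limit_of_theta (K δ : ℝ) (hK : 0 < K) (hδ : δ ∈ Set.Ioo 0 (1 / 6))
    (k : ℤ) (hk : k = 0 ∨ k = 1 ∨ k = 2) :
    TendstoUniformlyOn
      (fun (ε : ℝ) (a : ℝ) =>
        ε * Real.log ‖theta k (-(a : ℂ) * tauE K ε) (tauE K ε)‖)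
      (fun (a : ℝ) =>
        -(9 * K / 2) * (Int.fract ((3 * K * a - ((k : ℝ) + 1) * K) / (3 * K)) - 1 / 2) ^ 2)
      (nhdsWithin 0 (Set.Ioi (0 : ℝ))) (Rdelta δ) :=
  ultradiscrete_limit_of_theta_general K δ hK hδ k
end
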